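/- Let n ≥ 2. The set 𝒜 of splay configurations in [0,2π]ⁿ is contained in the union over permutations σ of S_n of the line segments {x ∈ [0,2π]ⁿ : x_{σ(i)} = t + 2π(i−1)/n mod-adjusted into [0,2π], t ∈ [0, 2π/n]}; in particular 𝒜 is a finite union of line segments in ℝⁿ. -/

import Mathlib

open Real

/-- Geodesic distance on the unit circle between angles `a` and `b`. -/
noncomputable def gd (a b : ℝ) : ℝ := sInf {r : ℝ | ∃ k : ℤ, r = |a - b + 2 * π * k|}

/-- `x` (as a point on the circle) lies in the arc starting at angle `a` of length `L`. -/
def inArc (a L x : ℝ) : Prop := ∃ m : ℤ, a ≤ x + 2 * π * m ∧ x + 2 * π * m ≤ a + L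

/-- Length of the shortest arc of the unit circle containing all the points `e^{i θ k}`. -/
noncomputable def gamma {n : ℕ} (θ : Fin n → ℝ) : ℝ :=
  sInf {L : ℝ | 0 ≤ L ∧ ∃ a : ℝ, ∀ k, inArc a L (θ k)}

/-- Cyclic successor on `Fin n`. -/
def nxt {n : ℕ} (hn : 0 < n) (i : Fin n) : Fin n := ⟨(i.val + 1) % n, Nat.mod_lt _ hn⟩

lemma gd_attained' (a b : ℝ) : ∃ k : ℤ,
    (∀ j : ℤ, |a - b + 2 * π * k| ≤ |a - b + 2 * π * j|) ∧
    gd a b = |a - b + 2 * π * k| := by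
  have hπ : (0:ℝ) < π := Real.pi_pos
  set c := a - b with hc
  set k₀ : ℤ := -round (c / (2 * π)) with hk₀
  have hbd : |c + 2 * π * k₀| ≤ π := by
    have h1 : c + 2 * π * k₀ = (2 * π) * (c / (2 * π) - round (c / (2 * π))) := by
      push_cast [hk₀]
      field_simp
      ring
    rw [h1, abs_mul, abs_of_pos (by linarith)]
    have := abs_sub_round (c / (2 * π))
    nlinarith
  have hmin : ∀ j : ℤ, |c + 2 * π * k₀| ≤ |c + 2 * π * j| := by
    intro j
    rcases eq_or_ne j k₀ with rfl | hne
    · exact le_rfl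
    · have h1 : (1:ℝ) ≤ |(j:ℝ) - (k₀:ℝ)| := by
        have : (1:ℤ) ≤ |j - k₀| := Int.one_le_abs (sub_ne_zero.mpr hne)
        exact_mod_cast this
      have h2 : |(c + 2 * π * j) - (c + 2 * π * k₀)| ≤ |c + 2 * π * j| + |c + 2 * π * k₀| :=
        abs_sub _ _
      have h3 : |(c + 2 * π * j) - (c + 2 * π * k₀)| = 2 * π * |(j:ℝ) - (k₀:ℝ)| := by
        rw [show (c + 2 * π * j) - (c + 2 * π * k₀) = (2*π) * ((j:ℝ) - (k₀:ℝ)) by ring,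
          abs_mul, abs_of_pos (by linarith)]
      nlinarith
  refine ⟨k₀, hmin, le_antisymm ?_ ?_⟩
  · exact csInf_le ⟨0, by rintro r ⟨k, rfl⟩; exact abs_nonneg _⟩ ⟨k₀, rfl⟩
  · exact le_csInf ⟨_, ⟨k₀, rfl⟩⟩ (by rintro r ⟨j, rfl⟩; exact hmin j)

lemma gap_val' (n : ℕ) (hn : 2 ≤ n) (c : ℝ) (hc0 : 0 ≤ c) (hc2 : c ≤ 2 * π)
    (k : ℤ) (h : |c + 2 * π * k| = 2 * π / n) :
    c = 2 * π / n ∨ c = 2 * π - 2 * π / n := by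
  have hπ : (0:ℝ) < π := Real.pi_pos
  have hn' : (2:ℝ) ≤ (n:ℝ) := by exact_mod_cast hn
  have hnpos : (0:ℝ) < (n:ℝ) := by linarith
  have hfr1 : 0 < 2 * π / n := by positivity
  have hfr2 : 2 * π / n ≤ π := by rw [div_le_iff₀ hnpos]; nlinarith
  rcases abs_eq (le_of_lt hfr1) |>.mp h with h1 | h1
  · left
    have hk1 : (k:ℝ) < 1 := by nlinarith
    have hk2 : (-1:ℝ) < (k:ℝ) := by nlinarith
    have : k = 0 := by
      have a1 : k < 1 := by exact_mod_cast hk1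
      have a2 : (-1:ℤ) < k := by exact_mod_cast hk2
      omega
    rw [this] at h1
    push_cast at h1
    linarith
  · right
    have hk1 : (k:ℝ) < 0 := by nlinarith
    have hk2 : (-2:ℝ) < (k:ℝ) := by nlinarith
    have : k = -1 := by
      have a1 : k < 0 := by exact_mod_cast hk1
      have a2 : (-2:ℤ) < k := by exact_mod_cast hk2
      omega
    rw [this] at h1
    push_cast at h1
    linarith

theorem stmt16 (n : ℕ) (hn : 2 ≤ n) (x : Fin n → ℝ)
    (hcube : ∀ i, x i ∈ Set.Icc 0 (2 * π))
    (hsplay : ∀ i : Fin n,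
      gd ((x ∘ Tuple.sort x) i) ((x ∘ Tuple.sort x) (nxt (by omega) i)) = 2 * π / n) :
    ∃ σ : Equiv.Perm (Fin n), ∃ t ∈ Set.Icc (0 : ℝ) (2 * π / n),
      ∀ i : Fin n, x (σ i) = t + 2 * π * i.val / n := by
  have hπ : (0:ℝ) < π := Real.pi_pos
  have hn' : (2:ℝ) ≤ (n:ℝ) := by exact_mod_cast hn
  have hnn : 0 < n := by omega
  set σ := Tuple.sort x with hσ
  set y : Fin n → ℝ := x ∘ σ with hy
  have hmono : Monotone y := Tuple.monotone_sort x
  have hyc : ∀ i : Fin n, 0 ≤ y i ∧ y i ≤ 2 * π := fun i => hcube (σ i)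
  have hfr2 : 2 * π / n ≤ π := by rw [div_le_iff₀ (by linarith : (0:ℝ) < (n:ℝ))]; nlinarith
  -- consecutive gaps
  have gapm : ∀ j : ℕ, ∀ (h : j + 1 < n),
      y ⟨j+1, h⟩ - y ⟨j, by omega⟩ = 2*π/n ∨ y ⟨j+1, h⟩ - y ⟨j, by omega⟩ = 2*π - 2*π/n := by
    intro j h
    have hs := hsplay ⟨j, by omega⟩
    have hnx : nxt (by omega) (⟨j, by omega⟩ : Fin n) = ⟨j+1, h⟩ := by
      simp [nxt, Nat.mod_eq_of_lt h]
    rw [hnx] at hs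
    obtain ⟨k, hk, hval⟩ := gd_attained' (y ⟨j, by omega⟩) (y ⟨j+1, h⟩)
    rw [hval] at hs
    have hle : y ⟨j, by omega⟩ ≤ y ⟨j+1, h⟩ := hmono (by simp [Fin.mk_le_mk])
    have habs : |(y ⟨j+1, h⟩ - y ⟨j, by omega⟩) + 2 * π * (-k : ℤ)| = 2 * π / n := by
      rw [show (y ⟨j+1, h⟩ - y ⟨j, by omega⟩) + 2 * π * ((-k : ℤ) : ℝ)
          = -((y ⟨j, by omega⟩ - y ⟨j+1, h⟩) + 2 * π * (k : ℝ)) by push_cast; ring, abs_neg]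
      exact hs
    exact gap_val' n hn _ (by linarith) (by linarith [(hyc ⟨j+1, h⟩).2, (hyc ⟨j, by omega⟩).1])
      (-k) habs
  -- wraparound gap
  have wrap : y ⟨n-1, by omega⟩ - y ⟨0, hnn⟩ = 2*π/n ∨
      y ⟨n-1, by omega⟩ - y ⟨0, hnn⟩ = 2*π - 2*π/n := by
    have hs := hsplay ⟨n-1, by omega⟩
    have hnx : nxt (by omega) (⟨n-1, by omega⟩ : Fin n) = ⟨0, hnn⟩ := by
      have hsub : n - 1 + 1 = n := by omega
      simp [nxt, hsub]
    rw [hnx] at hs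
    obtain ⟨k, hk, hval⟩ := gd_attained' (y ⟨n-1, by omega⟩) (y ⟨0, hnn⟩)
    rw [hval] at hs
    have hle : y ⟨0, hnn⟩ ≤ y ⟨n-1, by omega⟩ := hmono (by simp [Fin.mk_le_mk])
    exact gap_val' n hn _ (by linarith) (by linarith [(hyc ⟨n-1, by omega⟩).2, (hyc ⟨0, hnn⟩).1])
      k hs
  have gapge : ∀ j : ℕ, ∀ (h : j + 1 < n), y ⟨j+1, h⟩ - y ⟨j, by omega⟩ ≥ 2*π/n := by
    intro j h
    rcases gapm j h with h1 | h1 <;> linarith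
  -- forward bound
  have fwd : ∀ j : ℕ, ∀ (h : j < n), y ⟨j, h⟩ ≥ y ⟨0, hnn⟩ + j * (2*π/n) := by
    intro j
    induction j with
    | zero => intro h; simp
    | succ m ih =>
      intro h
      have hm : m < n := by omega
      have h1 := ih hm
      have h2 := gapge m h
      push_cast
      linarith
  -- backward bound
  have bwd : ∀ m : ℕ, ∀ j : ℕ, ∀ hj : j + m = n - 1,
      y ⟨n-1, by omega⟩ - y ⟨j, by omega⟩ ≥ m * (2*π/n) := by
    intro m
    induction m with
    | zero =>
      intro j hj
      have : j = n - 1 := by omega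
      subst this
      simp
    | succ m ih =>
      intro j hj
      have h1 : j + 1 < n := by omega
      have h2 := ih (j+1) (by omega)
      have h3 := gapge j h1
      push_cast
      linarith
  -- top equality
  have hcast1 : ((n - 1 : ℕ) : ℝ) = (n:ℝ) - 1 := by
    have : (1:ℕ) ≤ n := by omega
    push_cast [this]
    ring
  have htop : y ⟨n-1, by omega⟩ - y ⟨0, hnn⟩ = ((n:ℝ) - 1) * (2*π/n) := by
    have hf := fwd (n-1) (by omega)
    rw [hcast1] at hf
    have hring : 2*π - 2*π/n = ((n:ℝ) - 1) * (2*π/n) := by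
      field_simp
    rcases wrap with h1 | h1
    · -- forces n = 2 essentially; equality by squeeze
      have hge : ((n:ℝ) - 1) * (2*π/n) ≥ 1 * (2*π/n) := by
        have : 0 < 2*π/n := by positivity
        nlinarith
      rw [h1]
      linarith
    · rw [h1, hring]
  -- exact values
  have key : ∀ j : ℕ, ∀ (h : j < n), y ⟨j, h⟩ = y ⟨0, hnn⟩ + j * (2*π/n) := by
    intro j h
    have h1 := fwd j h
    have h2 := bwd (n - 1 - j) j (by omega)
    have hcast2 : ((n - 1 - j : ℕ) : ℝ) = (n:ℝ) - 1 - j := by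
      have : j + (n - 1 - j) + 1 = n := by omega
      have := congrArg (fun m : ℕ => (m : ℝ)) this
      push_cast at this
      linarith
    rw [hcast2] at h2
    have hring : ((n:ℝ) - 1) * (2*π/n) - ((n:ℝ) - 1 - j) * (2*π/n) = j * (2*π/n) := by ring
    linarith
  refine ⟨σ, y ⟨0, hnn⟩, ⟨(hyc ⟨0, hnn⟩).1, ?_⟩, ?_⟩
  · -- t ≤ 2π/n
    have h1 := (hyc ⟨n-1, by omega⟩).2
    have hring : ((n:ℝ) - 1) * (2*π/n) = 2*π - 2*π/n := by
      field_simp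
    linarith [htop, hring ▸ htop]
  · intro i
    have h1 := key i.val i.isLt
    have h2 : (⟨i.val, i.isLt⟩ : Fin n) = i := Fin.eta i i.isLt
    rw [h2] at h1
    have : x (σ i) = y i := rfl
    rw [this, h1]
    ring
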